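/- Fix b > 0 and N ≥ 1/(2b), and let 𝓕(b) denote the convex set of all probability distributions on ℝ that are symmetric, supported on [−N, N], and whose distribution functions are Lipschitz with constant b (equivalently, absolutely continuous with density bounded by b almost everywhere). Then the extreme points of 𝓕(b) are exactly the distributions whose density equals (up to a set of Lebesgue measure zero) b·1_B for some symmetric Borel set B ⊆ [−N, N] with Lebesgue measure λ(B) = 1/b. -/

import Mathlib

open MeasureTheory

/-- A distribution on `ℝ` is symmetric if it is invariant under `x ↦ -x`. -/
def SymmetricDist (μ : Measure ℝ) : Prop :=
  μ.map (fun x => -x) = μ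

/-- `μ` is an extreme point of the set `S` of probability measures: it belongs to `S`
and cannot be written as a nontrivial convex combination of two distinct members of `S`. -/
def ExtremePt (S : Set (Measure ℝ)) (μ : Measure ℝ) : Prop :=
  μ ∈ S ∧ ∀ μ₁ ∈ S, ∀ μ₂ ∈ S, ∀ β : ℝ, 0 < β → β < 1 →
    μ = ENNReal.ofReal (1 - β) • μ₁ + ENNReal.ofReal β • μ₂ → μ₁ = μ₂

/-!
A member of `𝓕(b)` is a symmetric probability measure on `[-N, N]` with `μ ≤ b λ`, i.e. with a
density `f ≤ b`. If `f` is not `{0, b}`-valued almost everywhere, the mass `ν` of the density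
`min f (b - f)` is nonzero; by the intermediate value theorem some symmetric interval `[-t, t]`
carries exactly half of it, and moving all of `ν` onto `[-t, t]`, or onto its complement, gives
two distinct members of `𝓕(b)` with midpoint `μ`. So an extreme point has density `b 1_B`, and
`B` can be cut down to a symmetric subset of `[-N, N]` without changing `μ`. Conversely, every
member of `𝓕(b)` absolutely continuous with respect to `b λ|_B` is dominated by it, and a finite
measure that is a proper convex combination of two measures it dominates equals both.
-/

open Set Filter Topology
open scoped ENNReal NNReal

section Cdf

variable (μ : Measure ℝ) [IsFiniteMeasure μ] {b : ℝ}

lemma measureReal_Ioc_eq_sub {a c : ℝ} (h : a ≤ c) :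
    μ.real (Ioc a c) = μ.real (Iic c) - μ.real (Iic a) := by
  rw [← Iic_sdiff_Iic, measureReal_sdiff (Iic_subset_Iic.2 h) measurableSet_Iic]

lemma le_smul_volume_of_lipschitzWith_cdf (hb : 0 ≤ b)
    (h : LipschitzWith b.toNNReal fun x => (μ (Iic x)).toReal) :
    μ ≤ ENNReal.ofReal b • volume := by
  have hinc : ∀ ⦃a c : ℝ⦄, a ≤ c → μ.real (Iic c) - μ.real (Iic a) ≤ b * (c - a) := by
    intro a c hac
    have := h.dist_le_mul c a
    rw [Real.dist_eq, Real.dist_eq, Real.coe_toNNReal b hb, abs_of_nonneg (sub_nonneg.2 hac)]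
      at this
    exact (le_abs_self _).trans this
  -- `b • volume` is `μ` plus the Stieltjes measure of the monotone function `b x - μ (Iic x)`.
  let G : StieltjesFunction ℝ :=
    { toFun := fun x => b * x - μ.real (Iic x)
      mono' := fun a c hac => by have := hinc hac; dsimp only; linarith
      right_continuous' := fun x =>
        ((continuous_const.mul continuous_id).sub h.continuous).continuousWithinAt }
  have hsum : ENNReal.ofReal b • volume = μ + G.measure := by
    refine Measure.ext_of_Ioc' _ _ (fun a c _ => ?_) (fun a c hac => ?_)
    · simp [Real.volume_Ioc, ENNReal.mul_ne_top]
    · rw [Measure.add_apply, Measure.smul_apply, smul_eq_mul, Real.volume_Ioc, G.measure_Ioc,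
        ← ofReal_measureReal, measureReal_Ioc_eq_sub μ hac.le, ← ENNReal.ofReal_mul hb,
        ← ENNReal.ofReal_add (sub_nonneg.2 (measureReal_mono (Iic_subset_Iic.2 hac.le)))
          (sub_nonneg.2 (G.mono hac.le))]
      congr 1
      change b * (c - a) = _ + ((b * c - μ.real (Iic c)) - (b * a - μ.real (Iic a)))
      ring
  exact hsum ▸ Measure.le_add_right le_rfl

lemma lipschitzWith_cdf_of_le_smul_volume (hb : 0 ≤ b) (h : μ ≤ ENNReal.ofReal b • volume) :
    LipschitzWith b.toNNReal fun x => (μ (Iic x)).toReal := by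
  refine LipschitzWith.of_le_add_mul' b fun x y => ?_
  change μ.real (Iic x) ≤ μ.real (Iic y) + b * dist x y
  rcases le_total x y with hxy | hyx
  · exact le_add_of_le_of_nonneg (measureReal_mono (Iic_subset_Iic.2 hxy))
      (mul_nonneg hb dist_nonneg)
  · have hIoc : μ.real (Ioc y x) ≤ b * (x - y) := by
      have := ENNReal.toReal_mono (by simp [Real.volume_Ioc, ENNReal.mul_ne_top]) (h (Ioc y x))
      rwa [Measure.smul_apply, smul_eq_mul, Real.volume_Ioc, ← ENNReal.ofReal_mul hb,
        ENNReal.toReal_ofReal (mul_nonneg hb (sub_nonneg.2 hyx))] at this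
    rw [measureReal_Ioc_eq_sub μ hyx] at hIoc
    rw [Real.dist_eq, abs_of_nonneg (sub_nonneg.2 hyx)]
    linarith

end Cdf

namespace SymmetricDist

variable {μ ν : Measure ℝ}

lemma measure_neg (h : SymmetricDist μ) (s : Set ℝ) : μ (-s) = μ s := by
  conv_rhs => rw [← h]
  exact ((MeasurableEquiv.neg ℝ).map_apply s).symm

lemma add (hμ : SymmetricDist μ) (hν : SymmetricDist ν) : SymmetricDist (μ + ν) := by
  rw [SymmetricDist, Measure.map_add _ _ measurable_neg, hμ, hν]

lemma smul (h : SymmetricDist μ) (c : ℝ≥0∞) : SymmetricDist (c • μ) := by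
  rw [SymmetricDist, Measure.map_smul, h]

lemma restrict (h : SymmetricDist μ) {A : Set ℝ} (hA : MeasurableSet A) (hA' : -A = A) :
    SymmetricDist (μ.restrict A) := by
  unfold SymmetricDist
  conv_rhs => rw [← h]
  rw [Measure.restrict_map measurable_neg hA, neg_preimage, hA']

end SymmetricDist

lemma symmetricDist_volume : SymmetricDist volume :=
  Measure.map_neg_eq_self volume

lemma map_neg_volume_withDensity (f : ℝ → ℝ≥0∞) :
    (volume.withDensity f).map (fun x => -x) = volume.withDensity fun x => f (-x) := by
  ext s hs
  rw [Measure.map_apply measurable_neg hs, withDensity_apply _ (measurable_neg hs),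
    withDensity_apply _ hs]
  simpa using (Measure.measurePreserving_neg volume).setLIntegral_comp_preimage_emb
    (MeasurableEquiv.neg ℝ).measurableEmbedding (fun x => f (-x)) s

lemma symmetricDist_withDensity_iff {f : ℝ → ℝ≥0∞} (hf : Measurable f) :
    SymmetricDist (volume.withDensity f) ↔ (fun x => f (-x)) =ᵐ[volume] f := by
  rw [SymmetricDist, map_neg_volume_withDensity f]
  exact withDensity_eq_iff_of_sigmaFinite (hf.comp measurable_neg).aemeasurable hf.aemeasurable

lemma extremePt_of_forall_le {S : Set (Measure ℝ)} {μ : Measure ℝ} [IsFiniteMeasure μ]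
    (hμ : μ ∈ S) (h : ∀ ρ ∈ S, ρ ≪ μ → ρ ≤ μ) : ExtremePt S μ := by
  refine ⟨hμ, fun μ₁ h₁ μ₂ h₂ β hβ0 hβ1 hmix => ?_⟩
  have hle₁ : μ₁ ≤ μ := h μ₁ h₁ <|
    (Measure.absolutelyContinuous_smul (by simpa using hβ1)).trans
      (Measure.absolutelyContinuous_of_le (hmix ▸ Measure.le_add_right le_rfl))
  have hle₂ : μ₂ ≤ μ := h μ₂ h₂ <|
    (Measure.absolutelyContinuous_smul (by simpa using hβ0)).trans
      (Measure.absolutelyContinuous_of_le (hmix ▸ Measure.le_add_left le_rfl))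
  ext s -
  have hfin₁ := ne_top_of_le_ne_top (measure_ne_top μ s) (hle₁ s)
  have hfin₂ := ne_top_of_le_ne_top (measure_ne_top μ s) (hle₂ s)
  have hs := congrArg (fun ρ : Measure ℝ => (ρ s).toReal) hmix
  simp only [Measure.add_apply, Measure.smul_apply, smul_eq_mul] at hs
  rw [ENNReal.toReal_add (ENNReal.mul_ne_top ENNReal.ofReal_ne_top hfin₁)
    (ENNReal.mul_ne_top ENNReal.ofReal_ne_top hfin₂), ENNReal.toReal_mul, ENNReal.toReal_mul,
    ENNReal.toReal_ofReal (by linarith), ENNReal.toReal_ofReal hβ0.le] at hs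
  have h₁s := ENNReal.toReal_mono (measure_ne_top μ s) (hle₁ s)
  have h₂s := ENNReal.toReal_mono (measure_ne_top μ s) (hle₂ s)
  have : (μ₁ s).toReal = (μ₂ s).toReal := by nlinarith
  exact (ENNReal.toReal_eq_toReal_iff' hfin₁ hfin₂).1 this

lemma exists_measure_Icc_neg_eq_measure_compl (ν : Measure ℝ) [IsFiniteMeasure ν] {c : ℝ}
    (hc : 0 ≤ c) (hν : ν ≤ ENNReal.ofReal c • volume) :
    ∃ t, ν (Icc (-t) t) = ν (Icc (-t) t)ᶜ := by
  rcases eq_or_ne ν 0 with rfl | hν0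
  · exact ⟨0, rfl⟩
  set F : ℝ → ℝ := fun x => ν.real (Iic x)
  have hF : Continuous F := (lipschitzWith_cdf_of_le_smul_volume ν hc hν).continuous
  have hIcc : ∀ t, 0 ≤ t → ν.real (Icc (-t) t) = F t - F (-t) := by
    intro t ht
    have hatom : ν {-t} = 0 := le_antisymm ((hν _).trans (by simp)) zero_le
    rw [← measureReal_Ioc_eq_sub ν (by linarith), measureReal_congr (Ioc_ae_eq_Icc' hatom)]
  have hlim : Tendsto (fun t => F t - F (-t)) atTop (𝓝 (ν.real univ)) := by
    have hmono : Monotone fun t : ℝ => Icc (-t) t := fun s t hst =>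
      Icc_subset_Icc (neg_le_neg hst) hst
    have hunion : ⋃ t : ℝ, Icc (-t) t = univ :=
      eq_univ_of_forall fun x => mem_iUnion.2 ⟨|x|, neg_abs_le x, le_abs_self x⟩
    have h := tendsto_measure_iUnion_atTop (μ := ν) hmono
    rw [hunion] at h
    refine ((ENNReal.tendsto_toReal (measure_ne_top ν univ)).comp h).congr' ?_
    filter_upwards [eventually_ge_atTop 0] with t ht using hIcc t ht
  have hpos : 0 < ν.real univ :=
    ENNReal.toReal_pos (Measure.measure_univ_ne_zero.2 hν0) (measure_ne_top ν univ)
  obtain ⟨t, ht0, ht⟩ : ν.real univ / 2 ∈ (fun t => F t - F (-t)) '' Ici 0 :=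
    isPreconnected_Ici.intermediate_value_Ico self_mem_Ici (le_principal_iff.2 (Ici_mem_atTop 0))
      (hF.sub (hF.comp continuous_neg)).continuousOn hlim
      ⟨by change F 0 - F (-0) ≤ _; rw [neg_zero, sub_self]; positivity, half_lt_self hpos⟩
  refine ⟨t, (ENNReal.toReal_eq_toReal_iff' (measure_ne_top ν _) (measure_ne_top ν _)).1 ?_⟩
  have hsplit := measureReal_add_measureReal_compl (μ := ν) (measurableSet_Icc (a := -t) (b := t))
  change ν.real _ = ν.real _
  have hIcc_t := hIcc t ht0
  simp only at ht
  linarith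

lemma eq_smul_restrict_inter {α : Type*} [MeasurableSpace α] {μ ρ : Measure α} {c : ℝ≥0∞}
    {B S : Set α} (hS : MeasurableSet S) (hμ : μ = c • ρ.restrict B) (hSc : μ Sᶜ = 0) :
    μ = c • ρ.restrict (S ∩ B) := by
  rw [← Measure.restrict_eq_self_of_ae_mem (mem_ae_iff.2 hSc), hμ, Measure.restrict_smul,
    Measure.restrict_restrict hS]

lemma smul_restrict_apply_compl_self {α : Type*} [MeasurableSpace α] (ρ : Measure α)
    (c : ℝ≥0∞) {B : Set α} (hB : MeasurableSet B) : (c • ρ.restrict B) Bᶜ = 0 := by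
  rw [Measure.smul_apply, Measure.restrict_apply hB.compl, compl_inter_self, measure_empty,
    smul_zero]

/-- The class `𝓕(b)`, with support in `[-N, N]`. -/
def symmetricLipschitzDists (b N : ℝ) : Set (Measure ℝ) :=
  {ν | IsProbabilityMeasure ν ∧ SymmetricDist ν ∧ ν (Icc (-N) N)ᶜ = 0 ∧
    LipschitzWith (Real.toNNReal b) (fun x => (ν (Iic x)).toReal)}

section symmetricLipschitzDists

variable {b N : ℝ} {μ ν : Measure ℝ}

lemma mem_symmetricLipschitzDists_iff (hb : 0 ≤ b) :
    ν ∈ symmetricLipschitzDists b N ↔ IsProbabilityMeasure ν ∧ SymmetricDist ν ∧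
      ν (Icc (-N) N)ᶜ = 0 ∧ ν ≤ ENNReal.ofReal b • volume :=
  and_congr_right fun _ => and_congr_right' <| and_congr_right'
    ⟨le_smul_volume_of_lipschitzWith_cdf ν hb, lipschitzWith_cdf_of_le_smul_volume ν hb⟩

lemma volume_eq_of_isProbabilityMeasure_smul_restrict (hb : 0 < b) {B : Set ℝ}
    (h : IsProbabilityMeasure (ENNReal.ofReal b • volume.restrict B)) :
    volume B = ENNReal.ofReal (1 / b) := by
  have := h.measure_univ
  rw [Measure.smul_apply, Measure.restrict_apply_univ, smul_eq_mul, mul_comm] at this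
  rw [one_div, ENNReal.ofReal_inv_of_pos hb]
  exact ENNReal.eq_inv_of_mul_eq_one_left this

lemma smul_volume_restrict_mem (hb : 0 < b) {B : Set ℝ} (hBm : MeasurableSet B)
    (hBN : B ⊆ Icc (-N) N) (hB : B = -B) (hvol : volume B = ENNReal.ofReal (1 / b)) :
    ENNReal.ofReal b • volume.restrict B ∈ symmetricLipschitzDists b N := by
  rw [mem_symmetricLipschitzDists_iff hb.le]
  refine ⟨⟨?_⟩, (symmetricDist_volume.restrict hBm hB.symm).smul _, ?_, ?_⟩
  · rw [Measure.smul_apply, Measure.restrict_apply_univ, hvol, smul_eq_mul,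
      ← ENNReal.ofReal_mul hb.le, mul_one_div_cancel hb.ne', ENNReal.ofReal_one]
  · rw [Measure.smul_apply, Measure.restrict_apply measurableSet_Icc.compl,
      measure_mono_null (fun x hx => absurd (hBN hx.2) hx.1) measure_empty, smul_zero]
  · gcongr
    exact Measure.restrict_le_self

lemma extremePt_smul_volume_restrict (hb : 0 < b) {B : Set ℝ} (hBm : MeasurableSet B)
    (hBN : B ⊆ Icc (-N) N) (hB : B = -B) (hvol : volume B = ENNReal.ofReal (1 / b)) :
    ExtremePt (symmetricLipschitzDists b N) (ENNReal.ofReal b • volume.restrict B) := by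
  have hmem := smul_volume_restrict_mem hb hBm hBN hB hvol
  have := hmem.1
  refine extremePt_of_forall_le hmem fun ρ hρ hac => ?_
  have hρB : ρ.restrict B = ρ :=
    Measure.restrict_eq_self_of_ae_mem (hac.ae_le (Measure.ae_smul_measure (ae_restrict_mem hBm) _))
  calc ρ = ρ.restrict B := hρB.symm
    _ ≤ (ENNReal.ofReal b • volume).restrict B :=
      Measure.restrict_mono subset_rfl ((mem_symmetricLipschitzDists_iff hb.le).1 hρ).2.2.2
    _ = ENNReal.ofReal b • volume.restrict B := Measure.restrict_smul _ _ _

lemma add_two_smul_restrict_mem (hb : 0 ≤ b) (hμF : μ ∈ symmetricLipschitzDists b N)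
    {μ₀ : Measure ℝ} (hμ : μ = μ₀ + ν) (hμ₀ : SymmetricDist μ₀) (hν : SymmetricDist ν)
    (hle : μ + ν ≤ ENNReal.ofReal b • volume) {A : Set ℝ} (hAm : MeasurableSet A) (hA : -A = A)
    (hνA : ν A = ν Aᶜ) :
    μ₀ + (2 : ℝ≥0∞) • ν.restrict A ∈ symmetricLipschitzDists b N := by
  obtain ⟨hprob, -, hsupp, -⟩ := (mem_symmetricLipschitzDists_iff hb).1 hμF
  have hνμ : ν ≤ μ := hμ ▸ Measure.le_add_left le_rfl
  have hle₂ : μ₀ + (2 : ℝ≥0∞) • ν.restrict A ≤ μ + ν := by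
    rw [hμ, two_smul, add_assoc]
    gcongr <;> exact Measure.restrict_le_self
  have hν_univ : ν univ = 2 * ν A := by rw [← measure_add_measure_compl hAm, ← hνA, two_mul]
  refine (mem_symmetricLipschitzDists_iff hb).2 ⟨⟨?_⟩, hμ₀.add ((hν.restrict hAm hA).smul _),
    ?_, hle₂.trans hle⟩
  · rw [Measure.add_apply, Measure.smul_apply, Measure.restrict_apply_univ, smul_eq_mul,
      ← hν_univ, ← Measure.add_apply, ← hμ, measure_univ]
  · refine nonpos_iff_eq_zero.1 ((hle₂ _).trans_eq ?_)
    rw [Measure.add_apply, hsupp, nonpos_iff_eq_zero.1 ((hνμ _).trans_eq hsupp), add_zero]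

lemma ExtremePt.eq_zero_of_eq_add (hb : 0 ≤ b) (h : ExtremePt (symmetricLipschitzDists b N) μ)
    {μ₀ : Measure ℝ} (hμ : μ = μ₀ + ν) (hμ₀ : SymmetricDist μ₀) (hν : SymmetricDist ν)
    (hle : μ + ν ≤ ENNReal.ofReal b • volume) : ν = 0 := by
  have hμ₀μ : μ₀ ≤ μ := hμ ▸ Measure.le_add_right le_rfl
  have : IsProbabilityMeasure μ := h.1.1
  have : IsFiniteMeasure ν := isFiniteMeasure_of_le μ (hμ ▸ Measure.le_add_left le_rfl)
  obtain ⟨t, ht⟩ := exists_measure_Icc_neg_eq_measure_compl ν hb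
    ((Measure.le_add_left le_rfl).trans hle)
  have hIcc : -Icc (-t) t = Icc (-t) t := by rw [neg_Icc, neg_neg]
  have hmix : μ = ENNReal.ofReal (1 - 2⁻¹) • (μ₀ + (2 : ℝ≥0∞) • ν.restrict (Icc (-t) t)) +
      ENNReal.ofReal 2⁻¹ • (μ₀ + (2 : ℝ≥0∞) • ν.restrict (Icc (-t) t)ᶜ) := by
    have h_half : ENNReal.ofReal 2⁻¹ * 2 = 1 := by
      rw [ENNReal.ofReal_inv_of_pos two_pos, ENNReal.ofReal_ofNat, ENNReal.inv_mul_cancel] <;>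
        norm_num
    rw [show (1 : ℝ) - 2⁻¹ = 2⁻¹ by norm_num, ← smul_add, add_add_add_comm, ← two_smul ℝ≥0∞ μ₀,
      ← smul_add (2 : ℝ≥0∞) (ν.restrict _), Measure.restrict_add_restrict_compl measurableSet_Icc,
      ← smul_add, smul_smul, h_half, one_smul, hμ]
  have h12 := h.2 _ (add_two_smul_restrict_mem hb h.1 hμ hμ₀ hν hle measurableSet_Icc hIcc ht) _
    (add_two_smul_restrict_mem hb h.1 hμ hμ₀ hν hle measurableSet_Icc.compl
      (by rw [compl_neg, hIcc]) (by rw [compl_compl, ht]))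
    2⁻¹ (by norm_num) (by norm_num) hmix
  have hA := congrArg (fun ρ : Measure ℝ => ρ (Icc (-t) t)) h12
  simp only [Measure.add_apply, Measure.smul_apply, Measure.restrict_apply measurableSet_Icc,
    inter_compl_self, measure_empty, smul_eq_mul, mul_zero, add_zero] at hA
  have hνA : ν (Icc (-t) t) = 0 := by
    simpa using (ENNReal.add_right_inj (ne_top_of_le_ne_top (measure_ne_top μ _) (hμ₀μ _))).1
      (hA.trans (add_zero _).symm)
  rw [← Measure.measure_univ_eq_zero, ← measure_add_measure_compl measurableSet_Icc, ← ht, hνA,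
    add_zero]

lemma ExtremePt.ae_eq_zero_or_eq (hb : 0 ≤ b) (h : ExtremePt (symmetricLipschitzDists b N) μ)
    {f : ℝ → ℝ≥0∞} (hf : Measurable f) (hμ : μ = volume.withDensity f)
    (hfb : ∀ᵐ x, f x ≤ ENNReal.ofReal b) : ∀ᵐ x, f x = 0 ∨ f x = ENNReal.ofReal b := by
  have hfsym := (symmetricDist_withDensity_iff hf).1 (hμ ▸ h.1.2.1)
  -- `g` is the largest perturbation of the density `f` in both directions keeping it in `[0, b]`.
  set g : ℝ → ℝ≥0∞ := fun x => min (f x) (ENNReal.ofReal b - f x)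
  have hgm : Measurable g := hf.min (measurable_const.sub hf)
  have hg : volume.withDensity g = 0 := by
    refine h.eq_zero_of_eq_add hb (μ₀ := volume.withDensity (f - g)) ?_ ?_ ?_ ?_
    · rw [hμ, ← withDensity_add_left (hf.sub hgm)]
      exact congrArg _ (funext fun x => (tsub_add_cancel_of_le (min_le_left _ _)).symm)
    · refine (symmetricDist_withDensity_iff (hf.sub hgm)).2 ?_
      filter_upwards [hfsym] with x hx
      simp only [Pi.sub_apply, g, hx]
    · refine (symmetricDist_withDensity_iff hgm).2 ?_
      filter_upwards [hfsym] with x hx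
      simp only [g, hx]
    · rw [hμ, ← withDensity_add_left hf, ← withDensity_const]
      refine withDensity_mono ?_
      filter_upwards [hfb] with x hx
      calc f x + g x ≤ f x + (ENNReal.ofReal b - f x) := by gcongr; exact min_le_right _ _
        _ = ENNReal.ofReal b := add_tsub_cancel_of_le hx
  filter_upwards [(withDensity_eq_zero_iff hgm.aemeasurable).1 hg, hfb] with x hx hxb
  rcases min_choice (f x) (ENNReal.ofReal b - f x) with h' | h'
  · exact Or.inl (h'.symm.trans hx)
  · exact Or.inr (le_antisymm hxb (tsub_eq_zero_iff_le.1 (h'.symm.trans hx)))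

lemma ExtremePt.exists_eq_smul_volume_restrict (hb : 0 ≤ b)
    (h : ExtremePt (symmetricLipschitzDists b N) μ) :
    ∃ B, MeasurableSet B ∧ μ = ENNReal.ofReal b • volume.restrict B := by
  obtain ⟨hprob, -, -, hle⟩ := (mem_symmetricLipschitzDists_iff hb).1 h.1
  set f := μ.rnDeriv volume
  have hf : Measurable f := Measure.measurable_rnDeriv μ volume
  have hμ : μ = volume.withDensity f :=
    (Measure.withDensity_rnDeriv_eq μ volume (Measure.absolutelyContinuous_of_le_smul hle)).symm
  have hfb : ∀ᵐ x, f x ≤ ENNReal.ofReal b := by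
    refine ae_le_of_forall_setLIntegral_le_of_sigmaFinite hf fun s hs _ => ?_
    rw [← withDensity_apply _ hs, ← hμ, setLIntegral_const]
    exact hle s
  refine ⟨f ⁻¹' {ENNReal.ofReal b}, hf (measurableSet_singleton _), ?_⟩
  rw [hμ, ← withDensity_const, ← withDensity_indicator (hf (measurableSet_singleton _))]
  refine withDensity_congr_ae ?_
  filter_upwards [h.ae_eq_zero_or_eq hb hf hμ hfb] with x hx
  by_cases hxb : f x = ENNReal.ofReal b
  · simp [hxb]
  · simp [indicator, hx.resolve_right hxb]

end symmetricLipschitzDists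

theorem stmt_14_general (b N : ℝ) (hb : 0 < b) (μ : Measure ℝ) :
    ExtremePt {ν | IsProbabilityMeasure ν ∧ SymmetricDist ν ∧
        ν (Set.Icc (-N) N)ᶜ = 0 ∧
        LipschitzWith (Real.toNNReal b) (fun x => (ν (Set.Iic x)).toReal)} μ ↔
      ∃ B : Set ℝ, MeasurableSet B ∧ B ⊆ Set.Icc (-N) N ∧ B = -B ∧
        volume B = ENNReal.ofReal (1 / b) ∧
        μ = ENNReal.ofReal b • volume.restrict B := by
  change ExtremePt (symmetricLipschitzDists b N) μ ↔ _
  refine ⟨fun h => ?_, fun ⟨B, hBm, hBN, hB, hvol, hμ⟩ =>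
    hμ ▸ extremePt_smul_volume_restrict hb hBm hBN hB hvol⟩
  obtain ⟨hprob, hsym, hsupp, -⟩ := h.1
  obtain ⟨B₀, hB₀, hμ₀⟩ := h.exists_eq_smul_volume_restrict hb.le
  have hB₁ : MeasurableSet (Icc (-N) N ∩ B₀) := measurableSet_Icc.inter hB₀
  have hμ₁ := eq_smul_restrict_inter measurableSet_Icc hμ₀ hsupp
  have hμ := eq_smul_restrict_inter hB₁.neg hμ₁ <| by
    rw [← compl_neg, hsym.measure_neg, hμ₁, smul_restrict_apply_compl_self _ _ hB₁]
  refine ⟨_, hB₁.neg.inter hB₁, inter_subset_right.trans inter_subset_left,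
    by rw [inter_neg (s := -(Icc (-N) N ∩ B₀)), neg_neg, inter_comm], ?_, hμ⟩
  exact volume_eq_of_isProbabilityMeasure_smul_restrict hb (hμ ▸ hprob)

theorem stmt_14 (b N : ℝ) (hb : 0 < b) (hN : 1 / (2 * b) ≤ N) (μ : Measure ℝ) :
    ExtremePt {ν | IsProbabilityMeasure ν ∧ SymmetricDist ν ∧
        ν (Set.Icc (-N) N)ᶜ = 0 ∧
        LipschitzWith (Real.toNNReal b) (fun x => (ν (Set.Iic x)).toReal)} μ ↔
      ∃ B : Set ℝ, MeasurableSet B ∧ B ⊆ Set.Icc (-N) N ∧ B = -B ∧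
        volume B = ENNReal.ofReal (1 / b) ∧
        μ = ENNReal.ofReal b • volume.restrict B :=
  stmt_14_general b N hb μ
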